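/- The soft-max function is ε-cocoercive: for every ε > 0 and all z, z' ∈ ℝⁿ, (σ_ε(z) − σ_ε(z'))ᵀ(z − z') ≥ ε‖σ_ε(z) − σ_ε(z')‖₂². -/

import Mathlib

/-!
Since `log σ_ε(z) = z / ε - log (∑ⱼ exp (zⱼ / ε))` and the entries of `σ_ε(z) - σ_ε(z')` sum to
zero, the left-hand side equals `ε ∑ᵢ (pᵢ - qᵢ)(log pᵢ - log qᵢ)` with `p = σ_ε(z)`, `q = σ_ε(z')`.
On `(0, 1]` the function `x ↦ log x - x` is increasing, so each summand is at least `ε (pᵢ - qᵢ)²`.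
-/

/-- The soft-max function with temperature `ε`. -/
noncomputable def softmax (ε : ℝ) {n : ℕ} (z : Fin n → ℝ) : Fin n → ℝ :=
  fun i => Real.exp (z i / ε) / ∑ j, Real.exp (z j / ε)

open Real Finset

lemma sub_le_log_sub_log {a b : ℝ} (hb : 0 < b) (hba : b ≤ a) (ha : a ≤ 1) :
    a - b ≤ log a - log b := by
  have ha₀ : 0 < a := hb.trans_le hba
  calc a - b ≤ (a - b) / a := le_div_self (sub_nonneg.2 hba) ha₀ ha
    _ = 1 - (a / b)⁻¹ := by field_simp
    _ ≤ log (a / b) := one_sub_inv_le_log_of_pos (div_pos ha₀ hb)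
    _ = log a - log b := log_div ha₀.ne' hb.ne'

lemma sq_sub_le_sub_mul_log_sub_log {a b : ℝ} (ha : 0 < a) (ha₁ : a ≤ 1) (hb : 0 < b)
    (hb₁ : b ≤ 1) : (a - b) ^ 2 ≤ (a - b) * (log a - log b) := by
  rcases le_total b a with hba | hab
  · rw [sq]
    exact mul_le_mul_of_nonneg_left (sub_le_log_sub_log hb hba ha₁) (sub_nonneg.2 hba)
  · nlinarith [sub_le_log_sub_log ha hab hb₁]

section Softmax

variable (ε : ℝ) {n : ℕ} (z : Fin n → ℝ)

lemma sum_exp_div_pos [NeZero n] : 0 < ∑ j, exp (z j / ε) :=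
  sum_pos (fun _ _ => exp_pos _) univ_nonempty

lemma softmax_pos (i : Fin n) : 0 < softmax ε z i :=
  have : NeZero n := ⟨i.pos.ne'⟩
  div_pos (exp_pos _) (sum_exp_div_pos ε z)

lemma softmax_le_one (i : Fin n) : softmax ε z i ≤ 1 :=
  have : NeZero n := ⟨i.pos.ne'⟩
  (div_le_one (sum_exp_div_pos ε z)).2
    (single_le_sum (f := fun j => exp (z j / ε)) (fun _ _ => (exp_pos _).le) (mem_univ i))

lemma sum_softmax [NeZero n] : ∑ i, softmax ε z i = 1 := by
  simp only [softmax]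
  rw [← sum_div, div_self (sum_exp_div_pos ε z).ne']

lemma log_softmax (i : Fin n) :
    log (softmax ε z i) = z i / ε - log (∑ j, exp (z j / ε)) := by
  have : NeZero n := ⟨i.pos.ne'⟩
  rw [softmax, log_div (exp_ne_zero _) (sum_exp_div_pos ε z).ne', log_exp]

lemma sum_softmax_sub_mul_sub [NeZero n] {ε : ℝ} (hε : ε ≠ 0) (z z' : Fin n → ℝ) :
    ∑ i, (softmax ε z i - softmax ε z' i) * (z i - z' i) =
      ε * ∑ i, (softmax ε z i - softmax ε z' i) *
        (log (softmax ε z i) - log (softmax ε z' i)) := by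
  set c := log (∑ j, exp (z j / ε)) - log (∑ j, exp (z' j / ε))
  have hz : ∀ i, z i - z' i =
      ε * (log (softmax ε z i) - log (softmax ε z' i)) + ε * c := by
    intro i
    rw [log_softmax, log_softmax]
    field_simp
    ring
  simp_rw [hz, mul_add, sum_add_distrib, ← sum_mul, sum_sub_distrib, sum_softmax, sub_self,
    zero_mul, add_zero, mul_sum]
  exact sum_congr rfl fun i _ => by ring

end Softmax

/-- The soft-max function is `ε`-cocoercive:
`(σ_ε(z) − σ_ε(z'))ᵀ(z − z') ≥ ε ‖σ_ε(z) − σ_ε(z')‖₂²`. -/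
theorem softmax_cocoercive (ε : ℝ) (hε : 0 < ε) (n : ℕ) (z z' : Fin n → ℝ) :
    ∑ i, (softmax ε z i - softmax ε z' i) * (z i - z' i) ≥
      ε * ∑ i, (softmax ε z i - softmax ε z' i) ^ 2 := by
  cases n with
  | zero => simp
  | succ n =>
    rw [ge_iff_le, sum_softmax_sub_mul_sub hε.ne']
    gcongr with i
    exact sq_sub_le_sub_mul_log_sub_log (softmax_pos ε z i) (softmax_le_one ε z i)
      (softmax_pos ε z' i) (softmax_le_one ε z' i)
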